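/- Let λ, λ̃ ∈ ℝ, μ, μ̃ ∈ ℝ, and suppose Ȳ is a process bounded by M such that for all T > 0 there is a probability Q_T with Ȳ₀ = E^{Q_T}[Ȳ_T] + (λ − λ̃)T + (μ − μ̃)E^{Q_T}[K_T] where E^{Q_T}[K_T] ≥ 0 and E^{Q_T}[K_T] ≤ C(1 + T) for a constant C. Then: (i) if μ ≤ μ̃ then λ ≥ λ̃ (monotonicity); (ii) |λ̃ − λ| ≤ C|μ̃ − μ| (Lipschitz continuity of μ ↦ λ(μ) with constant C). -/

import Mathlib

/-!
The identity writes `(λ - λ̃) T` as a quantity bounded uniformly in `T` plus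
`(μ - μ̃) E^{Q_T}[K_T]`. The latter is `≤ 0` when `μ ≤ μ̃` and at most `|μ̃ - μ| C (1 + T)` in
absolute value, so dividing by `T` and letting `T → ∞` gives both claims.
-/

open MeasureTheory

lemma le_of_forall_pos_mul_le_add_mul {a b A : ℝ} (h : ∀ T > 0, a * T ≤ A + b * T) : a ≤ b := by
  by_contra! hba
  have hab : 0 < a - b := sub_pos.2 hba
  have hT : 0 < (|A| + 1) / (a - b) := by positivity
  have hlin : (a - b) * ((|A| + 1) / (a - b)) = |A| + 1 := mul_div_cancel₀ _ hab.ne'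
  linarith [h _ hT, le_abs_self A]

section LinearIdentity

variable {x k : ℝ → ℝ} {M Y0 C lam lam' μ μ' : ℝ}

lemma le_of_bounded_linear_identity (hx : ∀ T > 0, |x T| ≤ M) (hk : ∀ T > 0, 0 ≤ k T)
    (heq : ∀ T > 0, Y0 = x T + (lam - lam') * T + (μ - μ') * k T) (hμ : μ ≤ μ') :
    lam' ≤ lam := by
  suffices lam' - lam ≤ 0 by linarith
  refine le_of_forall_pos_mul_le_add_mul (A := M + |Y0|) fun T hT => ?_
  have hboundary : (μ - μ') * k T ≤ 0 := mul_nonpos_of_nonpos_of_nonneg (by linarith) (hk T hT)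
  linarith [heq T hT, le_of_abs_le (hx T hT), neg_abs_le Y0]

lemma abs_sub_le_of_bounded_linear_identity (hx : ∀ T > 0, |x T| ≤ M)
    (hk : ∀ T > 0, 0 ≤ k T) (hkC : ∀ T > 0, k T ≤ C * (1 + T))
    (heq : ∀ T > 0, Y0 = x T + (lam - lam') * T + (μ - μ') * k T) :
    |lam' - lam| ≤ C * |μ' - μ| := by
  refine le_of_forall_pos_mul_le_add_mul (A := M + |Y0| + C * |μ' - μ|) fun T hT => ?_
  have hdiff : (lam' - lam) * T = x T - Y0 + (μ - μ') * k T := by linarith [heq T hT]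
  calc |lam' - lam| * T = |x T - Y0 + (μ - μ') * k T| := by
        rw [← hdiff, abs_mul, abs_of_pos hT]
    _ ≤ |x T - Y0| + |(μ - μ') * k T| := abs_add_le _ _
    _ ≤ |x T| + |Y0| + |μ' - μ| * k T := by
        rw [abs_mul, abs_sub_comm μ, abs_of_nonneg (hk T hT)]
        linarith [abs_sub (x T) Y0]
    _ ≤ M + |Y0| + |μ' - μ| * (C * (1 + T)) := by
        gcongr
        exacts [hx T hT, hkC T hT]
    _ = M + |Y0| + C * |μ' - μ| + C * |μ' - μ| * T := by ring

end LinearIdentity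

theorem stmt16_general {Ω : Type*} [MeasurableSpace Ω]
    (Q : ℝ → Measure Ω) (hQ : ∀ T, IsProbabilityMeasure (Q T))
    (Ybar : ℝ → Ω → ℝ) (M : ℝ) (hM : ∀ t ω, |Ybar t ω| ≤ M)
    (Y0 : ℝ)
    (K : ℝ → Ω → ℝ) (C : ℝ)
    (lam lam' μ μ' : ℝ)
    (hKpos : ∀ T > (0 : ℝ), 0 ≤ ∫ ω, K T ω ∂(Q T))
    (hKgrowth : ∀ T > (0 : ℝ), ∫ ω, K T ω ∂(Q T) ≤ C * (1 + T))
    (heq : ∀ T > (0 : ℝ),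
      Y0 = (∫ ω, Ybar T ω ∂(Q T)) + (lam - lam') * T + (μ - μ') * ∫ ω, K T ω ∂(Q T)) :
    (μ ≤ μ' → lam' ≤ lam) ∧ |lam' - lam| ≤ C * |μ' - μ| := by
  have hYbar : ∀ T > (0 : ℝ), |∫ ω, Ybar T ω ∂(Q T)| ≤ M := fun T _ => by
    have := hQ T
    simpa using norm_integral_le_of_norm_le_const (μ := Q T) (f := Ybar T) (ae_of_all _ (hM T))
  exact ⟨le_of_bounded_linear_identity hYbar hKpos heq,
    abs_sub_le_of_bounded_linear_identity hYbar hKpos hKgrowth heq⟩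

/-- Monotonicity and Lipschitz continuity of `μ ↦ λ(μ)`: if the bounded difference
`Ȳ = Ỹ - Y` of two EBSDE solutions satisfies, for every horizon `T > 0` under the
Girsanov measure `Q_T`, the identity
`Ȳ₀ = E^{Q_T}[Ȳ_T] + (λ - λ̃)T + (μ - μ̃)E^{Q_T}[K_T]` with
`0 ≤ E^{Q_T}[K_T] ≤ C(1+T)`, then `μ ≤ μ̃ → λ̃ ≤ λ` and `|λ̃ - λ| ≤ C|μ̃ - μ|`. -/
theorem stmt16 {Ω : Type*} [MeasurableSpace Ω]
    (Q : ℝ → Measure Ω) (hQ : ∀ T, IsProbabilityMeasure (Q T))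
    (Ybar : ℝ → Ω → ℝ) (M : ℝ) (hM : ∀ t ω, |Ybar t ω| ≤ M)
    (Y0 : ℝ) (hY0 : |Y0| ≤ M)
    (K : ℝ → Ω → ℝ) (C : ℝ)
    (lam lam' μ μ' : ℝ)
    (hKpos : ∀ T > (0 : ℝ), 0 ≤ ∫ ω, K T ω ∂(Q T))
    (hKgrowth : ∀ T > (0 : ℝ), ∫ ω, K T ω ∂(Q T) ≤ C * (1 + T))
    (heq : ∀ T > (0 : ℝ),
      Y0 = (∫ ω, Ybar T ω ∂(Q T)) + (lam - lam') * T + (μ - μ') * ∫ ω, K T ω ∂(Q T)) :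
    (μ ≤ μ' → lam' ≤ lam) ∧ |lam' - lam| ≤ C * |μ' - μ| :=
  stmt16_general Q hQ Ybar M hM Y0 K C lam lam' μ μ' hKpos hKgrowth heq
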